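/- Let N = N(Q_n, m, r) be a quasi Q_n-filiform Lie algebra. Then there exists a derivation h_1 of N such that h_1 e_{i0} = -2i·e_{i0} and h_1 e_{i1} = i(n-2)·e_{i1} for all 1 ≤ i ≤ m. -/

import Mathlib

open Finset

/-- A quasi `Qₙ`-filiform Lie algebra `N = N(Qₙ, m, r)`: a finite-dimensional complex
nilpotent Lie algebra which is the sum of `m` pairwise commuting subalgebras, each
isomorphic to the filiform Lie algebra `Qₙ` with basis `e i 0, …, e i n` satisfying the
`Qₙ` bracket relations, and such that
`{e 1 0, …, e 1 (n-1), …, e m 0, …, e m (n-1), e 1 n, …, e r n}` is a basis of `N`,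
where `r = dim c^{n-1} N`. -/
structure QuasiQnFiliform (n m r : ℕ) (N : Type*) [LieRing N] [LieAlgebra ℂ N] : Type _ where
  /-- the distinguished vectors `e_{ij}`, for `1 ≤ i ≤ m`, `0 ≤ j ≤ n` -/
  e : ℕ → ℕ → N
  /-- `N` is nilpotent -/
  nilpotent : LieRing.IsNilpotent N
  /-- `N` is finite-dimensional -/
  findim : FiniteDimensional ℂ N
  /-- `[e_{i0}, e_{ij}] = e_{i,j+1}` for `1 ≤ j ≤ n - 2` -/
  bracket_e0 : ∀ i j, 1 ≤ i → i ≤ m → 1 ≤ j → j ≤ n - 2 → ⁅e i 0, e i j⁆ = e i (j + 1)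
  /-- `[e_{i0}, e_{i,n-1}] = 0` -/
  bracket_e0_top : ∀ i, 1 ≤ i → i ≤ m → ⁅e i 0, e i (n - 1)⁆ = 0
  /-- `[e_{i0}, e_{in}] = 0` -/
  bracket_e0_n : ∀ i, 1 ≤ i → i ≤ m → ⁅e i 0, e i n⁆ = 0
  /-- `[e_{ij}, e_{i,n-j}] = (-1)^j e_{in}` for `1 ≤ j ≤ n - 1` -/
  bracket_pair : ∀ i j, 1 ≤ i → i ≤ m → 1 ≤ j → j ≤ n - 1 →
    ⁅e i j, e i (n - j)⁆ = ((-1 : ℂ)) ^ j • e i n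
  /-- all remaining brackets inside a component vanish -/
  bracket_zero : ∀ i j k, 1 ≤ i → i ≤ m → 1 ≤ j → j ≤ n → 1 ≤ k → k ≤ n → j + k ≠ n →
    ⁅e i j, e i k⁆ = 0
  /-- distinct components commute: `[N_i, N_{i'}] = 0` -/
  bracket_comm : ∀ i i' j j', 1 ≤ i → i ≤ m → 1 ≤ i' → i' ≤ m → i ≠ i' → j ≤ n → j' ≤ n →
    ⁅e i j, e i' j'⁆ = 0
  /-- `{e_{i0}, …, e_{in}}` is linearly independent (each `Nᵢ ≅ Qₙ` has it as a basis) -/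
  indep_comp : ∀ i, 1 ≤ i → i ≤ m → LinearIndependent ℂ (fun j : Fin (n + 1) => e i (j : ℕ))
  /-- the distinguished family is linearly independent … -/
  basis_indep : LinearIndependent ℂ
    (Sum.elim (fun p : Fin m × Fin n => e ((p.1 : ℕ) + 1) (p.2 : ℕ))
      (fun t : Fin r => e ((t : ℕ) + 1) n))
  /-- … and spans `N`, i.e. it is a basis of `N` (in particular `N = N₁ + ⋯ + N_m`) -/
  basis_span : Submodule.span ℂ (Set.range
    (Sum.elim (fun p : Fin m × Fin n => e ((p.1 : ℕ) + 1) (p.2 : ℕ))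
      (fun t : Fin r => e ((t : ℕ) + 1) n))) = ⊤
  /-- `r = dim c^{n-1} N` -/
  rank_lcs : Module.finrank ℂ (LieModule.lowerCentralSeries ℂ N N (n - 1)) = r

/-!
`h₁` is the diagonal map with `e_{i0} ↦ -2i e_{i0}`, `e_{ij} ↦ i(n - 2j) e_{ij}` for `0 < j < n`
and `e_{in} ↦ 0`. These weights add up along the nonzero brackets `[e_{i0}, e_{ij}] = e_{i,j+1}`
and `[e_{ij}, e_{i,n-j}] = ±e_{in}`, so the map is a derivation as soon as it really kills every
`e_{in}`. Only `e_{1n}, …, e_{rn}` belong to the basis, but every `e_{in}` lies in `c^{n-1}N`,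
whose dimension `r` forces it to be spanned by `e_{1n}, …, e_{rn}`.
-/

open LieModule

def LieDerivation.ofBasis {R L ι : Type*} [CommRing R] [LieRing L] [LieAlgebra R L]
    (b : Module.Basis ι R L) (D : L →ₗ[R] L)
    (h : ∀ i j, D ⁅b i, b j⁆ = ⁅D (b i), b j⁆ + ⁅b i, D (b j)⁆) : LieDerivation R L L where
  toLinearMap := D
  leibniz' x y := by
    let bracket : L →ₗ[R] L →ₗ[R] L := toEnd R L L
    have key : bracket.compr₂ D = bracket.comp D + bracket.compl₂ D :=
      LinearMap.ext_basis b b fun i j => by simpa [bracket] using h i j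
    have hxy := LinearMap.congr_fun₂ key x y
    simp only [bracket, LinearMap.compr₂_apply, LieHom.coe_toLinearMap, toEnd_apply_apply,
      LinearMap.add_apply, LinearMap.coe_comp, Function.comp_apply,
      LinearMap.compl₂_apply] at hxy
    rw [hxy, ← lie_skew y]
    abel

namespace QuasiQnFiliform

noncomputable def weight (n i j : ℕ) : ℂ :=
  if j = n then 0 else if j = 0 then -(2 * i) else i * (n - 2 * j)

section weight

variable {n i j : ℕ}

lemma weight_self (n i : ℕ) : weight n i n = 0 := if_pos rfl

lemma weight_zero (hn : n ≠ 0) : weight n i 0 = -(2 * i) := by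
  rw [weight, if_neg hn.symm, if_pos rfl]

lemma weight_of_pos_of_lt (hj : 0 < j) (hjn : j < n) : weight n i j = i * (n - 2 * j) := by
  rw [weight, if_neg hjn.ne, if_neg hj.ne']

lemma weight_zero_add_weight (hj : 0 < j) (hjn : j + 1 < n) :
    weight n i 0 + weight n i j = weight n i (j + 1) := by
  rw [weight_zero (by omega), weight_of_pos_of_lt hj (by omega),
    weight_of_pos_of_lt j.succ_pos hjn]
  push_cast
  ring

lemma weight_add_weight_sub (hj : 0 < j) (hjn : j < n) :
    weight n i j + weight n i (n - j) = 0 := by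
  rw [weight_of_pos_of_lt hj hjn, weight_of_pos_of_lt (by omega) (by omega),
    Nat.cast_sub hjn.le]
  ring

end weight

variable {n m r : ℕ} {N : Type*} [LieRing N] [LieAlgebra ℂ N] (Q : QuasiQnFiliform n m r N)

def row : (Fin m × Fin n) ⊕ Fin r → ℕ := Sum.elim (fun p => p.1 + 1) (fun t => t + 1)

def col : (Fin m × Fin n) ⊕ Fin r → ℕ := Sum.elim (fun p => p.2) (fun _ => n)

lemma one_le_row (a : (Fin m × Fin n) ⊕ Fin r) : 1 ≤ row a := by
  cases a <;> simp [row]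

lemma row_le (hrm : r ≤ m) (a : (Fin m × Fin n) ⊕ Fin r) : row a ≤ m := by
  rcases a with ⟨i, j⟩ | t
  · exact i.isLt
  · exact t.isLt.trans_le hrm

lemma col_le (a : (Fin m × Fin n) ⊕ Fin r) : col a ≤ n := by
  rcases a with ⟨i, j⟩ | t
  · exact j.isLt.le
  · exact le_rfl

noncomputable def basis : Module.Basis ((Fin m × Fin n) ⊕ Fin r) ℂ N :=
  .mk Q.basis_indep Q.basis_span.ge

lemma basis_apply (a : (Fin m × Fin n) ⊕ Fin r) : Q.basis a = Q.e (row a) (col a) := by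
  rw [basis, Module.Basis.mk_apply]
  cases a <;> rfl

noncomputable def diag : N →ₗ[ℂ] N :=
  Q.basis.constr ℂ fun a => weight n (row a) (col a) • Q.basis a

lemma diag_basis (a : (Fin m × Fin n) ⊕ Fin r) :
    Q.diag (Q.basis a) = weight n (row a) (col a) • Q.basis a :=
  Q.basis.constr_basis ℂ _ a

lemma diag_e_of_lt {i j : ℕ} (hi : 1 ≤ i) (him : i ≤ m) (hj : j < n) :
    Q.diag (Q.e i j) = weight n i j • Q.e i j := by
  obtain ⟨k, rfl⟩ : ∃ k, i = k + 1 := ⟨i - 1, by omega⟩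
  simpa [basis_apply, row, col] using Q.diag_basis (.inl (⟨k, by omega⟩, ⟨j, hj⟩))

lemma e_succ_mem_lowerCentralSeries {i : ℕ} (hi : 1 ≤ i) (him : i ≤ m) {k : ℕ} (hk : k + 2 ≤ n) :
    Q.e i (k + 1) ∈ lowerCentralSeries ℂ N N k := by
  induction k with
  | zero => exact LieSubmodule.mem_top _
  | succ k ih =>
    rw [lowerCentralSeries_succ, ← Q.bracket_e0 i (k + 1) hi him k.succ_pos (by omega)]
    exact LieSubmodule.lie_mem_lie (LieSubmodule.mem_top _) (ih (by omega))

lemma e_top_mem_lowerCentralSeries (hn : 2 ≤ n) {i : ℕ} (hi : 1 ≤ i) (him : i ≤ m) :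
    Q.e i n ∈ lowerCentralSeries ℂ N N (n - 1) := by
  have hpair : Q.e i n = -⁅Q.e i 1, Q.e i (n - 1)⁆ := by
    rw [Q.bracket_pair i 1 hi him le_rfl (by omega)]
    simp
  rw [hpair, show n - 1 = n - 2 + 1 by omega, lowerCentralSeries_succ]
  refine neg_mem (LieSubmodule.lie_mem_lie (LieSubmodule.mem_top _) ?_)
  simpa [show n - 2 + 1 = n - 1 by omega] using
    Q.e_succ_mem_lowerCentralSeries hi him (k := n - 2) (by omega)

lemma span_e_top_eq_lowerCentralSeries (hrm : r ≤ m) (hn : 2 ≤ n) :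
    Submodule.span ℂ (Set.range fun t : Fin r => Q.e (t + 1) n) =
      (lowerCentralSeries ℂ N N (n - 1)).toSubmodule := by
  have := Q.findim
  have hindep : LinearIndependent ℂ fun t : Fin r => Q.e (t + 1) n :=
    Q.basis_indep.comp Sum.inr Sum.inr_injective
  refine Submodule.eq_of_le_of_finrank_eq ?_ ?_
  · rw [Submodule.span_le]
    rintro _ ⟨t, rfl⟩
    exact Q.e_top_mem_lowerCentralSeries hn t.succ_pos (t.isLt.trans_le hrm)
  · rw [finrank_span_eq_card hindep, Fintype.card_fin]
    exact Q.rank_lcs.symm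

lemma diag_e_top (hrm : r ≤ m) (hn : 2 ≤ n) {i : ℕ} (hi : 1 ≤ i) (him : i ≤ m) :
    Q.diag (Q.e i n) = 0 := by
  have hspan : Submodule.span ℂ (Set.range fun t : Fin r => Q.e (t + 1) n) ≤
      LinearMap.ker Q.diag := by
    rw [Submodule.span_le]
    rintro _ ⟨t, rfl⟩
    simpa [basis_apply, row, col, weight_self] using Q.diag_basis (.inr t)
  apply hspan
  rw [Q.span_e_top_eq_lowerCentralSeries hrm hn]
  exact Q.e_top_mem_lowerCentralSeries hn hi him

lemma diag_lie_e_zero (hn : 2 ≤ n) {i j : ℕ} (hi : 1 ≤ i) (him : i ≤ m) (hj : j ≤ n) :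
    Q.diag ⁅Q.e i 0, Q.e i j⁆ = (weight n i 0 + weight n i j) • ⁅Q.e i 0, Q.e i j⁆ := by
  rcases Nat.eq_zero_or_pos j with rfl | hj0
  · simp
  by_cases hjn : j + 1 < n
  · rw [Q.bracket_e0 i j hi him hj0 (by omega), Q.diag_e_of_lt hi him hjn,
      weight_zero_add_weight hj0 hjn]
  · obtain rfl | rfl : j = n - 1 ∨ j = n := by omega
    · simp [Q.bracket_e0_top i hi him]
    · simp [Q.bracket_e0_n i hi him]

lemma diag_lie_e (hrm : r ≤ m) (hn : 2 ≤ n) {i i' j j' : ℕ} (hi : 1 ≤ i) (him : i ≤ m)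
    (hi' : 1 ≤ i') (hi'm : i' ≤ m) (hj : j ≤ n) (hj' : j' ≤ n) :
    Q.diag ⁅Q.e i j, Q.e i' j'⁆ = (weight n i j + weight n i' j') • ⁅Q.e i j, Q.e i' j'⁆ := by
  rcases eq_or_ne i i' with rfl | hii'
  swap
  · simp [Q.bracket_comm i i' j j' hi him hi' hi'm hii' hj hj']
  rcases Nat.eq_zero_or_pos j with rfl | hj0
  · exact Q.diag_lie_e_zero hn hi him hj'
  rcases Nat.eq_zero_or_pos j' with rfl | hj'0
  · rw [← lie_skew, map_neg, Q.diag_lie_e_zero hn hi him hj, smul_neg, add_comm]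
  by_cases hjj' : j + j' = n
  · obtain rfl : j' = n - j := by omega
    rw [weight_add_weight_sub hj0 (by omega), zero_smul, Q.bracket_pair i j hi him hj0 (by omega),
      map_smul, Q.diag_e_top hrm hn hi him, smul_zero]
  · simp [Q.bracket_zero i j j' hi him hj0 hj hj'0 hj' hjj']

noncomputable def derivation (hrm : r ≤ m) (hn : 2 ≤ n) : LieDerivation ℂ N N :=
  .ofBasis Q.basis Q.diag fun a b => by
    rw [Q.diag_basis, Q.diag_basis, smul_lie, lie_smul, ← add_smul, Q.basis_apply, Q.basis_apply]
    exact Q.diag_lie_e hrm hn (one_le_row a) (row_le hrm a) (one_le_row b) (row_le hrm b)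
      (col_le a) (col_le b)

lemma derivation_apply (hrm : r ≤ m) (hn : 2 ≤ n) (x : N) :
    Q.derivation hrm hn x = Q.diag x :=
  rfl

end QuasiQnFiliform

theorem exists_diagonal_derivation_general
    (n d m r : ℕ) (hn : n = 2 * d + 1) (hd : 2 ≤ d)
    (hrm : r ≤ m)
    (N : Type*) [LieRing N] [LieAlgebra ℂ N] (Q : QuasiQnFiliform n m r N) :
    ∃ h₁ : LieDerivation ℂ N N, ∀ i, 1 ≤ i → i ≤ m →
      h₁ (Q.e i 0) = (-(2 * (i : ℂ))) • Q.e i 0 ∧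
      h₁ (Q.e i 1) = (((i * (n - 2) : ℕ) : ℂ)) • Q.e i 1 := by
  have hn2 : 2 ≤ n := by omega
  refine ⟨Q.derivation hrm hn2, fun i hi him => ⟨?_, ?_⟩⟩
  · rw [Q.derivation_apply, Q.diag_e_of_lt hi him (by omega),
      QuasiQnFiliform.weight_zero (by omega)]
  · rw [Q.derivation_apply, Q.diag_e_of_lt hi him (by omega),
      QuasiQnFiliform.weight_of_pos_of_lt one_pos (by omega)]
    push_cast [Nat.cast_sub hn2, mul_one]
    rfl

/-- Every quasi `Qₙ`-filiform Lie algebra `N = N(Qₙ, m, r)` admits a derivation `h₁`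
with `h₁ e_{i0} = -2i·e_{i0}` and `h₁ e_{i1} = i(n-2)·e_{i1}` for all `1 ≤ i ≤ m`. -/
theorem exists_diagonal_derivation
    (n d m r : ℕ) (hn : n = 2 * d + 1) (hd : 2 ≤ d)
    (hm : 1 ≤ m) (hr : 1 ≤ r) (hrm : r ≤ m)
    (N : Type*) [LieRing N] [LieAlgebra ℂ N] (Q : QuasiQnFiliform n m r N) :
    ∃ h₁ : LieDerivation ℂ N N, ∀ i, 1 ≤ i → i ≤ m →
      h₁ (Q.e i 0) = (-(2 * (i : ℂ))) • Q.e i 0 ∧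
      h₁ (Q.e i 1) = (((i * (n - 2) : ℕ) : ℂ)) • Q.e i 1 :=
  exists_diagonal_derivation_general n d m r hn hd hrm N Q
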